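/- arXiv:math/0309087 — 9 statements merged into one kernel-verified Lean document; each statement's English description precedes it below -/
import Mathlib

section
/- For n = 2, the linear map sending a vector V ∈ ℝ² to the trilinear form A_V(X,Y,Z) = ⟨X,Y⟩⟨V,Z⟩ − ⟨V,Y⟩⟨X,Z⟩ on ℝ² (where ⟨·,·⟩ is the standard inner product) is a linear isomorphism from ℝ² onto the space of all trilinear forms A on ℝ² satisfying A(X,V,W) + A(X,W,V) = 0 for all X, V, W. -/
open RealInnerProductSpace

/-- The space `𝒜^g` of possible difference tensors between a metric connection and the
Levi-Civita connection: trilinear forms `A` on `ℝⁿ` satisfying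
`A(X,V,W) + A(X,W,V) = 0` for all `X, V, W`. -/
noncomputable def metricDifferenceTensors (n : ℕ) :
    Submodule ℝ (MultilinearMap ℝ (fun _ : Fin 3 => EuclideanSpace ℝ (Fin n)) ℝ) where
  carrier := {A | ∀ X V W, A ![X, V, W] + A ![X, W, V] = 0}
  add_mem' := by
    intro a b ha hb X V W
    have h1 := ha X V W
    have h2 := hb X V W
    simp only [MultilinearMap.add_apply]
    linarith
  zero_mem' := by intro X V W; simp
  smul_mem' := by
    intro c a ha X V W
    have h := ha X V W
    simp only [MultilinearMap.smul_apply, smul_eq_mul, ← mul_add, h, mul_zero]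

/-! In dimension two a trilinear form antisymmetric in its last two arguments is determined by
the two numbers `A(e₀, e₀, e₁)` and `A(e₁, e₀, e₁)`. For `A = A_V` these are `V₁` and `-V₀`, so
`V ↦ A_V` is a bijection. -/

section InnerProductSpace

variable {E : Type*} [NormedAddCommGroup E] [InnerProductSpace ℝ E]

noncomputable def vectorialDifferenceTensor :
    E →ₗ[ℝ] MultilinearMap ℝ (fun _ : Fin 3 => E) ℝ where
  toFun V := .mk' (fun f => ⟪f 0, f 1⟫ * ⟪V, f 2⟫ - ⟪V, f 1⟫ * ⟪f 0, f 2⟫)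
    (fun f i x y => by fin_cases i <;> simp [inner_add_left, inner_add_right] <;> ring)
    (fun f i c x => by fin_cases i <;> simp [inner_smul_left, inner_smul_right] <;> ring)
  map_add' V W := by ext f; simp [inner_add_left]; ring
  map_smul' c V := by ext f; simp [inner_smul_left]; ring

@[simp]
theorem vectorialDifferenceTensor_apply (V X Y Z : E) :
    vectorialDifferenceTensor V ![X, Y, Z] = ⟪X, Y⟫ * ⟪V, Z⟫ - ⟪V, Y⟫ * ⟪X, Z⟫ :=
  rfl

end InnerProductSpace

namespace metricDifferenceTensors

variable {n : ℕ} {A : MultilinearMap ℝ (fun _ : Fin 3 => EuclideanSpace ℝ (Fin n)) ℝ}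

theorem apply_swap (hA : A ∈ metricDifferenceTensors n) (X V W : EuclideanSpace ℝ (Fin n)) :
    A ![X, W, V] = -A ![X, V, W] :=
  eq_neg_of_add_eq_zero_right (hA X V W)

theorem apply_self (hA : A ∈ metricDifferenceTensors n) (X V : EuclideanSpace ℝ (Fin n)) :
    A ![X, V, V] = 0 := by
  linarith [hA X V V]

theorem vectorialDifferenceTensor_mem (V : EuclideanSpace ℝ (Fin n)) :
    vectorialDifferenceTensor V ∈ metricDifferenceTensors n := by
  intro X Y Z
  simp only [vectorialDifferenceTensor_apply]
  ring

theorem ext_single {A B : metricDifferenceTensors n}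
    (h : ∀ i j k : Fin n, j < k →
      A.1 ![.single i 1, .single j 1, .single k 1] = B.1 ![.single i 1, .single j 1, .single k 1]) :
    A = B := by
  refine Subtype.ext (Module.Basis.ext_multilinear (fun _ => PiLp.basisFun 2 ℝ (Fin n)) fun v => ?_)
  have hv : (fun i => PiLp.basisFun 2 ℝ (Fin n) (v i)) = ![EuclideanSpace.single (v 0) 1,
      EuclideanSpace.single (v 1) 1, EuclideanSpace.single (v 2) 1] := by
    funext i; fin_cases i <;> simp [PiLp.basisFun_apply]
  rw [hv]
  rcases lt_trichotomy (v 1) (v 2) with hlt | heq | hgt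
  · exact h _ _ _ hlt
  · rw [heq, apply_self A.2, apply_self B.2]
  · rw [apply_swap A.2, apply_swap B.2, h _ _ _ hgt]

end metricDifferenceTensors

noncomputable def vectorialTorsion (n : ℕ) :
    EuclideanSpace ℝ (Fin n) →ₗ[ℝ] metricDifferenceTensors n :=
  vectorialDifferenceTensor.codRestrict _ metricDifferenceTensors.vectorialDifferenceTensor_mem

theorem vectorialTorsion_apply_single_zero (V : EuclideanSpace ℝ (Fin 2)) :
    (vectorialTorsion 2 V).1 ![.single 0 1, .single 0 1, .single 1 1] = V 1 := by
  simp [vectorialTorsion, EuclideanSpace.inner_single_right]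

theorem vectorialTorsion_apply_single_one (V : EuclideanSpace ℝ (Fin 2)) :
    (vectorialTorsion 2 V).1 ![.single 1 1, .single 0 1, .single 1 1] = -V 0 := by
  simp [vectorialTorsion, EuclideanSpace.inner_single_right]

theorem vectorialTorsion_injective : Function.Injective (vectorialTorsion 2) := by
  rw [injective_iff_map_eq_zero]
  intro V hV
  have h0 := vectorialTorsion_apply_single_zero V
  have h1 := vectorialTorsion_apply_single_one V
  rw [hV] at h0 h1
  ext i
  fin_cases i
  · simpa using h1
  · simpa using h0.symm

theorem vectorialTorsion_surjective : Function.Surjective (vectorialTorsion 2) := by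
  intro A
  refine ⟨.single 1 (A.1 ![.single 0 1, .single 0 1, .single 1 1]) -
    .single 0 (A.1 ![.single 1 1, .single 0 1, .single 1 1]),
    metricDifferenceTensors.ext_single fun i j k hjk => ?_⟩
  obtain ⟨rfl, rfl⟩ : j = 0 ∧ k = 1 := by omega
  fin_cases i
  · simp [vectorialTorsion_apply_single_zero]
  · simp [vectorialTorsion_apply_single_one]

/-- For `n = 2`, the linear map `V ↦ A_V` with
`A_V(X,Y,Z) = ⟨X,Y⟩⟨V,Z⟩ − ⟨V,Y⟩⟨X,Z⟩` is a linear isomorphism from `ℝ²` onto the space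
of trilinear forms on `ℝ²` antisymmetric in the last two arguments. -/
theorem vectorialTorsion_linearEquiv_dim2 :
    ∃ e : EuclideanSpace ℝ (Fin 2) ≃ₗ[ℝ] metricDifferenceTensors 2,
      ∀ (V X Y Z : EuclideanSpace ℝ (Fin 2)),
        (e V : MultilinearMap ℝ (fun _ : Fin 3 => EuclideanSpace ℝ (Fin 2)) ℝ) ![X, Y, Z]
          = ⟪X, Y⟫ * ⟪V, Z⟫ - ⟪V, Y⟫ * ⟪X, Z⟫ :=
  ⟨.ofBijective _ ⟨vectorialTorsion_injective, vectorialTorsion_surjective⟩,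
    fun V X Y Z => vectorialDifferenceTensor_apply V X Y Z⟩
end

section
/- Let A : ℝⁿ → ℝⁿ be a skew-adjoint linear map (⟨Au, v⟩ = −⟨u, Av⟩ for all u, v), b ∈ ℝⁿ, and define the Killing vector field V(p) = A p + b. Let E > 0 and let γ : ℝ → ℝⁿ be a twice differentiable curve with ‖γ'(t)‖ = E satisfying γ''(t) + E² V(γ(t)) − ⟨V(γ(t)), γ'(t)⟩ γ'(t) = 0 for all t. Then (d/dt) ⟨V(γ(t)), γ'(t)⟩ = −‖γ''(t)‖²/E² for all t; in particular the function t ↦ ⟨V(γ(t)), γ'(t)⟩ is monotonically non-increasing. -/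
open RealInnerProductSpace

/-- For a Killing vector field `V(p) = A p + b` (with `A` skew-adjoint) on Euclidean space
and a geodesic `γ` of speed `E` of the metric connection with vectorial torsion defined
by `V`, one has `(d/dt)⟨V(γ), γ'⟩ = −‖γ''‖²/E²`; in particular `t ↦ ⟨V(γ(t)), γ'(t)⟩` is
monotonically non-increasing. -/
theorem killing_pairing_antitone (n : ℕ)
    (A : EuclideanSpace ℝ (Fin n) →ₗ[ℝ] EuclideanSpace ℝ (Fin n))
    (hA : ∀ u v : EuclideanSpace ℝ (Fin n), ⟪A u, v⟫ = -⟪u, A v⟫)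
    (b : EuclideanSpace ℝ (Fin n))
    (V : EuclideanSpace ℝ (Fin n) → EuclideanSpace ℝ (Fin n))
    (hV : ∀ p, V p = A p + b)
    (E : ℝ) (hE : 0 < E) (γ : ℝ → EuclideanSpace ℝ (Fin n))
    (hγ : Differentiable ℝ γ) (hγ' : Differentiable ℝ (deriv γ))
    (hspeed : ∀ t : ℝ, ‖deriv γ t‖ = E)
    (heq : ∀ t : ℝ, deriv (deriv γ) t + E ^ 2 • V (γ t)
        - ⟪V (γ t), deriv γ t⟫ • deriv γ t = 0) :
    (∀ t : ℝ, deriv (fun s => ⟪V (γ s), deriv γ s⟫) t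
        = -‖deriv (deriv γ) t‖ ^ 2 / E ^ 2)
      ∧ Antitone (fun t => ⟪V (γ t), deriv γ t⟫) := by
  set Ac := LinearMap.toContinuousLinearMap A with hAc
  -- derivative of s ↦ V (γ s)
  have hVd : ∀ t, HasDerivAt (fun s => V (γ s)) (A (deriv γ t)) t := by
    intro t
    have h1 : HasDerivAt γ (deriv γ t) t := (hγ t).hasDerivAt
    have h2 : HasDerivAt (fun s => Ac (γ s)) (Ac (deriv γ t)) t :=
      (Ac.hasFDerivAt.comp_hasDerivAt t h1)
    have h3 : HasDerivAt (fun s => Ac (γ s) + b) (Ac (deriv γ t)) t :=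
      h2.add_const b
    have : (fun s => V (γ s)) = fun s => Ac (γ s) + b := by
      funext s; simp [hV, hAc]
    rw [this]; exact h3
  have hskew : ∀ u : EuclideanSpace ℝ (Fin n), ⟪A u, u⟫ = 0 := by
    intro u
    have := hA u u
    have h2 : ⟪(A u : EuclideanSpace ℝ (Fin n)), u⟫ = ⟪u, A u⟫ := real_inner_comm _ _
    linarith [this, h2.symm ▸ this]
  -- ⟪γ', γ''⟫ = 0
  have horth : ∀ t, ⟪deriv γ t, deriv (deriv γ) t⟫ = 0 := by
    intro t
    have h1 : HasDerivAt (deriv γ) (deriv (deriv γ) t) t := (hγ' t).hasDerivAt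
    have h2 : HasDerivAt (fun s => ⟪deriv γ s, deriv γ s⟫)
        (⟪deriv γ t, deriv (deriv γ) t⟫ + ⟪deriv (deriv γ) t, deriv γ t⟫) t :=
      h1.inner ℝ h1
    have h3 : (fun s => ⟪deriv γ s, deriv γ s⟫) = fun _ => E ^ 2 := by
      funext s
      rw [real_inner_self_eq_norm_sq, hspeed s]
    rw [h3] at h2
    have h4 : (⟪deriv γ t, deriv (deriv γ) t⟫ + ⟪deriv (deriv γ) t, deriv γ t⟫ : ℝ) = 0 :=
      h2.unique (hasDerivAt_const t _)
    have h5 : ⟪deriv (deriv γ) t, deriv γ t⟫ = ⟪deriv γ t, deriv (deriv γ) t⟫ :=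
      real_inner_comm _ _
    linarith
  have hfd : ∀ t, HasDerivAt (fun s => ⟪V (γ s), deriv γ s⟫)
      (⟪V (γ t), deriv (deriv γ) t⟫) t := by
    intro t
    have h := (hVd t).inner ℝ (hγ' t).hasDerivAt
    have hz : ⟪A (deriv γ t), deriv γ t⟫ = 0 := hskew _
    simpa [hz] using h
  have key : ∀ t, ⟪V (γ t), deriv (deriv γ) t⟫ = -‖deriv (deriv γ) t‖ ^ 2 / E ^ 2 := by
    intro t
    have h0 := heq t
    have h1 : deriv (deriv γ) t =
        ⟪V (γ t), deriv γ t⟫ • deriv γ t - E ^ 2 • V (γ t) := by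
      apply eq_of_sub_eq_zero
      rw [← h0]; abel
    have h2 : ‖deriv (deriv γ) t‖ ^ 2 = ⟪deriv (deriv γ) t, deriv (deriv γ) t⟫ :=
      (real_inner_self_eq_norm_sq _).symm
    have h3 : ⟪deriv (deriv γ) t, deriv (deriv γ) t⟫
        = ⟪V (γ t), deriv γ t⟫ * ⟪deriv (deriv γ) t, deriv γ t⟫
          - E ^ 2 * ⟪deriv (deriv γ) t, V (γ t)⟫ := by
      nth_rewrite 2 [h1]
      rw [inner_sub_right, real_inner_smul_right, real_inner_smul_right]
    have h4 : ⟪deriv (deriv γ) t, deriv γ t⟫ = 0 := by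
      rw [real_inner_comm]; exact horth t
    have h5 : ⟪deriv (deriv γ) t, V (γ t)⟫ = ⟪V (γ t), deriv (deriv γ) t⟫ :=
      real_inner_comm _ _
    have hE2 : E ^ 2 ≠ 0 := by positivity
    rw [neg_div, eq_comm, neg_eq_iff_eq_neg, eq_comm, eq_div_iff hE2]
    linear_combination -h2 - h3 - ⟪V (γ t), deriv γ t⟫ * h4 + E ^ 2 * h5
  constructor
  · intro t
    rw [(hfd t).deriv, key t]
  · have hdiff : Differentiable ℝ (fun t => ⟪V (γ t), deriv γ t⟫) :=
      fun t => (hfd t).differentiableAt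
    apply antitone_of_deriv_nonpos hdiff
    intro t
    rw [(hfd t).deriv, key t, neg_div]
    have : (0:ℝ) ≤ ‖deriv (deriv γ) t‖ ^ 2 / E ^ 2 := by positivity
    linarith
end

section
/- Let A : ℝⁿ → ℝⁿ be a skew-adjoint linear map, b ∈ ℝⁿ, and V(p) = A p + b the associated Killing vector field. Let E > 0 and let γ : ℝ → ℝⁿ be a twice differentiable curve with ‖γ'(t)‖ = E satisfying γ''(t) + E² V(γ(t)) − ⟨V(γ(t)), γ'(t)⟩ γ'(t) = 0 for all t. If γ is periodic, i.e. there is T > 0 with γ(t + T) = γ(t) for all t, then γ''(t) = 0 for all t (γ is a straight line, a Levi-Civita geodesic), and there is a constant c = ⟨V(γ(t)), γ'(t)⟩ such that E² V(γ(t)) = c γ'(t) for all t, so that up to the constant c/E² the curve γ is an integral curve of V. -/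
open RealInnerProductSpace

/-- For a Killing vector field `V(p) = A p + b` (with `A` skew-adjoint) on Euclidean space,
any periodic geodesic of the metric connection with vectorial torsion defined by `V` is a
Levi-Civita geodesic (a straight line, `γ'' = 0`) and, up to the constant
`c/E²` with `c = ⟨V(γ), γ'⟩`, an integral curve of `V`: `E² V(γ) = c γ'`. -/
theorem periodic_vectorial_geodesic (n : ℕ)
    (A : EuclideanSpace ℝ (Fin n) →ₗ[ℝ] EuclideanSpace ℝ (Fin n))
    (hA : ∀ u v : EuclideanSpace ℝ (Fin n), ⟪A u, v⟫ = -⟪u, A v⟫)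
    (b : EuclideanSpace ℝ (Fin n))
    (V : EuclideanSpace ℝ (Fin n) → EuclideanSpace ℝ (Fin n))
    (hV : ∀ p, V p = A p + b)
    (E : ℝ) (hE : 0 < E) (γ : ℝ → EuclideanSpace ℝ (Fin n))
    (hγ : Differentiable ℝ γ) (hγ' : Differentiable ℝ (deriv γ))
    (hspeed : ∀ t : ℝ, ‖deriv γ t‖ = E)
    (heq : ∀ t : ℝ, deriv (deriv γ) t + E ^ 2 • V (γ t)
        - ⟪V (γ t), deriv γ t⟫ • deriv γ t = 0)
    (T : ℝ) (hT : 0 < T) (hper : ∀ t : ℝ, γ (t + T) = γ t) :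
    (∀ t : ℝ, deriv (deriv γ) t = 0)
      ∧ ∃ c : ℝ, (∀ t : ℝ, ⟪V (γ t), deriv γ t⟫ = c)
          ∧ ∀ t : ℝ, E ^ 2 • V (γ t) = c • deriv γ t := by
  set g := deriv γ with hg
  -- second derivative from the equation
  have hsnd : ∀ t, deriv g t = ⟪V (γ t), g t⟫ • g t - E ^ 2 • V (γ t) := by
    intro t
    have := heq t
    have : deriv g t = ⟪V (γ t), g t⟫ • g t - E ^ 2 • V (γ t) := by
      have h := heq t
      abel_nf at h ⊢
      linear_combination (norm := abel) h
    exact this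
  set f : ℝ → ℝ := fun t => ⟪V (γ t), g t⟫ with hf
  -- skew-adjointness: ⟪A u, u⟫ = 0
  have hskew : ∀ u, ⟪A u, u⟫ = 0 := by
    intro u
    have h := hA u u
    have h2 : ⟪u, A u⟫ = ⟪A u, u⟫ := real_inner_comm _ _
    linarith
  set Ac := A.toContinuousLinearMap with hAc
  -- derivative of f
  have hfderiv : ∀ t, HasDerivAt f (f t * f t - E ^ 2 * ‖V (γ t)‖ ^ 2) t := by
    intro t
    have hγt : HasDerivAt γ (g t) t := (hγ t).hasDerivAt
    have hVt : HasDerivAt (fun s => V (γ s)) (Ac (g t)) t := by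
      have h1 : HasDerivAt (fun s => Ac (γ s)) (Ac (g t)) t :=
        (Ac.hasFDerivAt.comp_hasDerivAt t hγt)
      have h2 := h1.add_const b
      refine h2.congr_of_eventuallyEq ?_
      filter_upwards with s
      rw [hV (γ s)]; rfl
    have hgt : HasDerivAt g (deriv g t) t := (hγ' t).hasDerivAt
    have := hVt.inner ℝ hgt
    have hz : ⟪(Ac (g t) : EuclideanSpace ℝ (Fin n)), g t⟫ = 0 := hskew (g t)
    rw [hsnd t] at this
    have hval : ⟪V (γ t), ⟪V (γ t), g t⟫ • g t - E ^ 2 • V (γ t)⟫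
        + ⟪(Ac (g t) : EuclideanSpace ℝ (Fin n)), g t⟫
        = f t * f t - E ^ 2 * ‖V (γ t)‖ ^ 2 := by
      rw [hz, inner_sub_right, real_inner_smul_right, real_inner_smul_right,
        real_inner_self_eq_norm_sq]
      ring
    rw [hval] at this
    exact this
  have hfdiff : Differentiable ℝ f := fun t => (hfderiv t).differentiableAt
  have hfd : ∀ t, deriv f t = f t * f t - E ^ 2 * ‖V (γ t)‖ ^ 2 := fun t =>
    (hfderiv t).deriv
  -- Cauchy-Schwarz: deriv f ≤ 0
  have hCS : ∀ t, f t * f t ≤ E ^ 2 * ‖V (γ t)‖ ^ 2 := by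
    intro t
    have := abs_real_inner_le_norm (V (γ t)) (g t)
    have h2 : |f t| ≤ ‖V (γ t)‖ * E := by rw [hf]; simpa [hspeed t] using this
    have h3 : |f t| * |f t| ≤ (‖V (γ t)‖ * E) * (‖V (γ t)‖ * E) :=
      mul_le_mul h2 h2 (abs_nonneg _) (le_trans (abs_nonneg _) h2)
    calc f t * f t = |f t| * |f t| := (abs_mul_abs_self _).symm
      _ ≤ (‖V (γ t)‖ * E) * (‖V (γ t)‖ * E) := h3
      _ = E ^ 2 * ‖V (γ t)‖ ^ 2 := by ring
  have hfanti : Antitone f := antitone_of_deriv_nonpos hfdiff fun t => by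
    rw [hfd t]; linarith [hCS t]
  -- g is periodic
  have hgper : ∀ t, g (t + T) = g t := by
    intro t
    have h1 : HasDerivAt γ (g (t + T)) (t + T) := (hγ _).hasDerivAt
    have h2 : HasDerivAt (fun s => γ (s + T)) (g (t + T)) t :=
      h1.comp_add_const t T
    have h3 : HasDerivAt γ (g (t + T)) t :=
      h2.congr_of_eventuallyEq (by filter_upwards with s; exact (hper s).symm)
    exact h3.deriv.symm ▸ rfl
  have hgper' : ∀ t, g (t + T) = g t := hgper
  have hfper : Function.Periodic f T := by
    intro t; simp only [hf]; rw [hper t, hgper t]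
  -- f is constant
  have hconst : ∀ s t, f s = f t := by
    have key : ∀ s t : ℝ, s ≤ t → f s = f t := by
      intro s t hst
      obtain ⟨k, hk⟩ := Archimedean.arch (t - s) hT
      have hks : t ≤ s + k • T := by
        have : (k • T : ℝ) = (k : ℝ) * T := by simp [nsmul_eq_mul]
        linarith [hk, this ▸ hk]
      have hpk : f (s + (k : ℝ) * T) = f s := hfper.nat_mul k s
      have h1 : f t ≤ f s := hfanti hst
      have h2 : f (s + (k : ℝ) * T) ≤ f t := hfanti (by
        have : (k • T : ℝ) = (k : ℝ) * T := by simp [nsmul_eq_mul]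
        linarith [this ▸ hk])
      linarith [hpk ▸ h2]
    intro s t
    rcases le_total s t with h | h
    · exact key s t h
    · exact (key t s h).symm
  set c := f 0 with hc
  have hfc : ∀ t, f t = c := fun t => hconst t 0
  -- deriv f = 0, so equality E^2 ‖V‖^2 = c^2
  have heqnorm : ∀ t, E ^ 2 * ‖V (γ t)‖ ^ 2 = c * c := by
    intro t
    have h0 : deriv f t = 0 := by
      have : f = fun _ => c := funext hfc
      rw [this]; simp
    have := hfd t
    rw [h0, hfc t] at this
    linarith
  -- E^2 • V = c • g
  have hmain : ∀ t, E ^ 2 • V (γ t) = c • g t := by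
    intro t
    have hw : ⟪E ^ 2 • V (γ t) - c • g t, E ^ 2 • V (γ t) - c • g t⟫ = 0 := by
      simp only [inner_sub_sub_self, real_inner_smul_left, real_inner_smul_right,
        real_inner_self_eq_norm_sq, norm_smul, Real.norm_eq_abs, mul_pow, sq_abs]
      rw [hspeed t]
      have h1 := heqnorm t
      have h2 : ⟪V (γ t), g t⟫ = c := hfc t
      have h3 : ⟪g t, V (γ t)⟫ = c := (real_inner_comm _ _).trans h2
      rw [h3, h2]
      nlinarith [h1]
    have := inner_self_eq_zero (𝕜 := ℝ).mp hw
    have h := sub_eq_zero.mp this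
    exact h
  refine ⟨?_, c, hfc, hmain⟩
  intro t
  have h := heq t
  have hc' : ⟪V (γ t), g t⟫ = c := hfc t
  rw [hc', ← hmain t] at h
  have h2 : deriv g t + E ^ 2 • V (γ t) - E ^ 2 • V (γ t) = 0 := h
  simpa using h2
end

section
/- Let σ : ℝⁿ → ℝ be a smooth function, set V = −grad σ, let E > 0, and let γ : ℝ → ℝⁿ be a twice differentiable curve with ‖γ'(t)‖ = E satisfying γ''(t) + E² V(γ(t)) − ⟨V(γ(t)), γ'(t)⟩ γ'(t) = 0 for all t. Then γ satisfies the pregeodesic equation of the conformal metric e^{2σ}⟨·,·⟩: for all t, γ''(t) + 2⟨grad σ(γ(t)), γ'(t)⟩ γ'(t) − E² grad σ(γ(t)) = ((d/dt)(σ∘γ)(t)) · γ'(t). -/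
open RealInnerProductSpace

/-- A geodesic `γ` of the metric connection with vectorial torsion defined by the gradient
vector field `V = −grad σ` satisfies the pregeodesic equation of the conformally
equivalent metric `e^{2σ}⟨·,·⟩`:
`∇̃_{γ'}γ' = γ'' + 2⟨grad σ(γ), γ'⟩ γ' − E² grad σ(γ) = ((d/dt)(σ∘γ)) γ'`. -/
theorem gradient_geodesic_pregeodesic (n : ℕ)
    (σ : EuclideanSpace ℝ (Fin n) → ℝ) (hσ : ContDiff ℝ (⊤ : ℕ∞) σ)
    (V : EuclideanSpace ℝ (Fin n) → EuclideanSpace ℝ (Fin n))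
    (hV : ∀ p, V p = -gradient σ p)
    (E : ℝ) (hE : 0 < E) (γ : ℝ → EuclideanSpace ℝ (Fin n))
    (hγ : Differentiable ℝ γ) (hγ' : Differentiable ℝ (deriv γ))
    (hspeed : ∀ t : ℝ, ‖deriv γ t‖ = E)
    (heq : ∀ t : ℝ, deriv (deriv γ) t + E ^ 2 • V (γ t)
        - ⟪V (γ t), deriv γ t⟫ • deriv γ t = 0) :
    ∀ t : ℝ, deriv (deriv γ) t + (2 * ⟪gradient σ (γ t), deriv γ t⟫) • deriv γ t
        - E ^ 2 • gradient σ (γ t)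
      = (deriv (fun s => σ (γ s)) t) • deriv γ t := by
  intro t
  have hgrad : HasGradientAt σ (gradient σ (γ t)) (γ t) :=
    ((hσ.differentiable (by simp)) (γ t)).hasGradientAt
  have hcomp : HasDerivAt (fun s => σ (γ s)) (⟪gradient σ (γ t), deriv γ t⟫) t := by
    have := hgrad.hasFDerivAt.comp_hasDerivAt t (hγ t).hasDerivAt
    exact this
  rw [hcomp.deriv]
  have h0 := heq t
  rw [hV (γ t)] at h0
  have h2 : deriv (deriv γ) t =
      E ^ 2 • gradient σ (γ t) - ⟪gradient σ (γ t), deriv γ t⟫ • deriv γ t := by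
    have := h0
    simp only [inner_neg_left, neg_smul, smul_neg] at this
    linear_combination (norm := module) this
  rw [h2]
  module
end

section
/- Let σ : ℝⁿ → ℝ be a smooth function, V = −grad σ, E > 0, and let γ : ℝ → ℝⁿ be a twice differentiable curve with ‖γ'(t)‖ = E satisfying γ''(t) + E² V(γ(t)) − ⟨V(γ(t)), γ'(t)⟩ γ'(t) = 0 for all t. Let τ : ℝ → ℝ be any differentiable function satisfying τ'(t) = e^{−σ(γ(τ(t)))} for all t. Then the reparametrized curve c = γ∘τ is a geodesic of the conformal metric e^{2σ}⟨·,·⟩, i.e. it satisfies c''(t) + 2⟨grad σ(c(t)), c'(t)⟩ c'(t) − ‖c'(t)‖² grad σ(c(t)) = 0 for all t; moreover τ satisfies τ''(t) + τ'(t) (d/dt)(σ∘γ∘τ)(t) = 0. -/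
open RealInnerProductSpace

/-- Geodesics of the metric connection with vectorial torsion `V = −grad σ` coincide, up to
the reparametrization `τ` with `τ' = e^{−σ∘γ∘τ}`, with the Levi-Civita geodesics of the
conformally equivalent metric `e^{2σ}⟨·,·⟩`; the reparametrization satisfies
`τ'' + τ'·(d/dt)(σ∘γ∘τ) = 0`. -/
theorem gradient_geodesic_reparam_conformal_geodesic (n : ℕ)
    (σ : EuclideanSpace ℝ (Fin n) → ℝ) (hσ : ContDiff ℝ (⊤ : ℕ∞) σ)
    (V : EuclideanSpace ℝ (Fin n) → EuclideanSpace ℝ (Fin n))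
    (hV : ∀ p, V p = -gradient σ p)
    (E : ℝ) (hE : 0 < E) (γ : ℝ → EuclideanSpace ℝ (Fin n))
    (hγ : Differentiable ℝ γ) (hγ' : Differentiable ℝ (deriv γ))
    (hspeed : ∀ t : ℝ, ‖deriv γ t‖ = E)
    (heq : ∀ t : ℝ, deriv (deriv γ) t + E ^ 2 • V (γ t)
        - ⟪V (γ t), deriv γ t⟫ • deriv γ t = 0)
    (τ : ℝ → ℝ) (hτ : Differentiable ℝ τ)
    (hτ' : ∀ t : ℝ, deriv τ t = Real.exp (-σ (γ (τ t)))) :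
    (∀ t : ℝ, deriv (deriv (γ ∘ τ)) t
        + (2 * ⟪gradient σ (γ (τ t)), deriv (γ ∘ τ) t⟫) • deriv (γ ∘ τ) t
        - ‖deriv (γ ∘ τ) t‖ ^ 2 • gradient σ (γ (τ t)) = 0)
      ∧ (∀ t : ℝ, deriv (deriv τ) t
          + deriv τ t * deriv (fun s => σ (γ (τ s))) t = 0) := by
  have hσd : Differentiable ℝ σ := hσ.differentiable (by simp)
  have hcd : ∀ t, HasDerivAt (γ ∘ τ) (deriv τ t • deriv γ (τ t)) t := fun t =>
    (hγ (τ t)).hasDerivAt.scomp t (hτ t).hasDerivAt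
  have hcderiv : ∀ t, deriv (γ ∘ τ) t = deriv τ t • deriv γ (τ t) := fun t => (hcd t).deriv
  have hfd : ∀ t, HasDerivAt (fun s => σ (γ (τ s)))
      (⟪gradient σ (γ (τ t)), deriv τ t • deriv γ (τ t)⟫) t := by
    intro t
    have h1 := (hσd (γ (τ t))).hasGradientAt.hasFDerivAt
    have h2 := h1.comp_hasDerivAt t (hcd t)
    simpa only [Function.comp_def, InnerProductSpace.toDual_apply_apply] using h2
  have hfderiv : ∀ t, deriv (fun s => σ (γ (τ s))) t
      = ⟪gradient σ (γ (τ t)), deriv τ t • deriv γ (τ t)⟫ := fun t => (hfd t).deriv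
  have hτ2 : ∀ t, HasDerivAt (deriv τ)
      (Real.exp (-σ (γ (τ t))) * -(⟪gradient σ (γ (τ t)), deriv τ t • deriv γ (τ t)⟫)) t := by
    intro t
    have hfun : deriv τ = fun s => Real.exp (-σ (γ (τ s))) := funext hτ'
    have h := ((hfd t).neg).exp
    simp only [Pi.neg_apply] at h
    rwa [← hfun] at h
  have part2 : ∀ t, deriv (deriv τ) t + deriv τ t * deriv (fun s => σ (γ (τ s))) t = 0 := by
    intro t
    rw [(hτ2 t).deriv, hfderiv t, hτ' t]
    ring
  refine ⟨?_, part2⟩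
  intro t
  have hγ'' : deriv (deriv γ) (τ t)
      = E ^ 2 • gradient σ (γ (τ t))
        - ⟪gradient σ (γ (τ t)), deriv γ (τ t)⟫ • deriv γ (τ t) := by
    have h := heq (τ t)
    rw [hV] at h
    rw [inner_neg_left, smul_neg, neg_smul, sub_neg_eq_add] at h
    have h2 : deriv (deriv γ) (τ t)
        + (- (E ^ 2 • gradient σ (γ (τ t)))
          + ⟪gradient σ (γ (τ t)), deriv γ (τ t)⟫ • deriv γ (τ t)) = 0 := by
      rw [← h]; abel
    have := eq_neg_of_add_eq_zero_left h2
    rw [this]; abel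
  have hdd : HasDerivAt (deriv (γ ∘ τ))
      (deriv τ t • (deriv τ t • deriv (deriv γ) (τ t))
        + (Real.exp (-σ (γ (τ t))) * -(⟪gradient σ (γ (τ t)), deriv τ t • deriv γ (τ t)⟫))
          • deriv γ (τ t)) t := by
    have hfun : deriv (γ ∘ τ) = fun s => deriv τ s • deriv γ (τ s) := funext hcderiv
    rw [hfun]
    exact HasDerivAt.smul (hτ2 t) ((hγ' (τ t)).hasDerivAt.scomp t (hτ t).hasDerivAt)
  have hnorm : ‖deriv τ t • deriv γ (τ t)‖ ^ 2 = deriv τ t ^ 2 * E ^ 2 := by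
    rw [norm_smul, mul_pow, hspeed, Real.norm_eq_abs, sq_abs]
  rw [hdd.deriv, hcderiv t, hnorm, ← hτ' t, hγ'',
    real_inner_smul_right]
  set a := deriv τ t
  set x := ⟪gradient σ (γ (τ t)), deriv γ (τ t)⟫
  set g := gradient σ (γ (τ t))
  set w := deriv γ (τ t)
  module
end

section
/- Let σ : ℝⁿ → ℝ be smooth, V = −grad σ, E > 0, and let γ : ℝ → ℝⁿ be a twice differentiable curve with ‖γ'(t)‖ = E satisfying γ''(t) + E² V(γ(t)) − ⟨V(γ(t)), γ'(t)⟩ γ'(t) = 0 for all t. Let X : ℝⁿ → ℝⁿ be a differentiable vector field that is Killing for the conformal metric e^{2σ}⟨·,·⟩, i.e. for all p, u, v ∈ ℝⁿ: ⟨DX(p)u, v⟩ + ⟨u, DX(p)v⟩ + 2⟨grad σ(p), X(p)⟩⟨u, v⟩ = 0, where DX(p) is the total derivative of X at p. Then the function t ↦ e^{σ(γ(t))} ⟨γ'(t), X(γ(t))⟩ is constant. -/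
open RealInnerProductSpace

/-- If `X` is a Killing vector field for the conformal metric `e^{2σ}⟨·,·⟩`, then
`e^{σ(γ)}⟨γ', X(γ)⟩` is a constant of motion along every geodesic `γ` of the metric
connection with vectorial torsion `V = −grad σ`. -/
theorem killing_invariant_of_motion (n : ℕ)
    (σ : EuclideanSpace ℝ (Fin n) → ℝ) (hσ : ContDiff ℝ (⊤ : ℕ∞) σ)
    (V : EuclideanSpace ℝ (Fin n) → EuclideanSpace ℝ (Fin n))
    (hV : ∀ p, V p = -gradient σ p)
    (E : ℝ) (hE : 0 < E) (γ : ℝ → EuclideanSpace ℝ (Fin n))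
    (hγ : Differentiable ℝ γ) (hγ' : Differentiable ℝ (deriv γ))
    (hspeed : ∀ t : ℝ, ‖deriv γ t‖ = E)
    (heq : ∀ t : ℝ, deriv (deriv γ) t + E ^ 2 • V (γ t)
        - ⟪V (γ t), deriv γ t⟫ • deriv γ t = 0)
    (X : EuclideanSpace ℝ (Fin n) → EuclideanSpace ℝ (Fin n))
    (hX : Differentiable ℝ X)
    (hKilling : ∀ p u v : EuclideanSpace ℝ (Fin n),
      ⟪fderiv ℝ X p u, v⟫ + ⟪u, fderiv ℝ X p v⟫
        + 2 * ⟪gradient σ p, X p⟫ * ⟪u, v⟫ = 0) :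
    ∀ s t : ℝ, Real.exp (σ (γ s)) * ⟪deriv γ s, X (γ s)⟫
      = Real.exp (σ (γ t)) * ⟪deriv γ t, X (γ t)⟫ := by
  have hσd : Differentiable ℝ σ := hσ.differentiable (by simp)
  have key : ∀ t : ℝ, HasDerivAt
      (fun s => Real.exp (σ (γ s)) * ⟪deriv γ s, X (γ s)⟫) 0 t := by
    intro t
    set p := γ t
    set u := deriv γ t
    set g := gradient σ p with hg
    have hγt : HasDerivAt γ u t := (hγ t).hasDerivAt
    have hγ't : HasDerivAt (deriv γ) (deriv (deriv γ) t) t := (hγ' t).hasDerivAt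
    have hσγ : HasDerivAt (fun s => σ (γ s)) (⟪g, u⟫) t := by
      have h1 : HasFDerivAt σ (InnerProductSpace.toDual ℝ _ g) p :=
        (hσd p).hasGradientAt.hasFDerivAt
      exact (h1.comp_hasDerivAt t hγt).congr_deriv (by simp)
    have hexp : HasDerivAt (fun s => Real.exp (σ (γ s)))
        (Real.exp (σ p) * ⟪g, u⟫) t := by
      exact (Real.hasDerivAt_exp (σ p)).comp t hσγ
    have hXγ : HasDerivAt (fun s => X (γ s)) (fderiv ℝ X p u) t :=
      (hX p).hasFDerivAt.comp_hasDerivAt t hγt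
    have hinner : HasDerivAt (fun s => ⟪deriv γ s, X (γ s)⟫)
        (⟪u, fderiv ℝ X p u⟫ + ⟪deriv (deriv γ) t, X p⟫) t :=
      hγ't.inner ℝ hXγ
    have hprod := hexp.mul hinner
    -- compute the derivative value is 0
    have husq : ⟪u, u⟫ = E ^ 2 := by
      rw [real_inner_self_eq_norm_sq, hspeed t]
    have hacc : deriv (deriv γ) t = E ^ 2 • g - ⟪g, u⟫ • u := by
      have h := heq t
      rw [hV, inner_neg_left, ← hg] at h
      linear_combination (norm := module) h
    have hkill : ⟪u, fderiv ℝ X p u⟫ = -(⟪g, X p⟫ * E ^ 2) := by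
      have h := hKilling p u u
      rw [husq, real_inner_comm (fderiv ℝ X p u) u, ← hg] at h
      linarith [real_inner_comm u (fderiv ℝ X p u)]
    have hXacc : ⟪deriv (deriv γ) t, X p⟫ = E ^ 2 * ⟪g, X p⟫ - ⟪g, u⟫ * ⟪u, X p⟫ := by
      rw [hacc, inner_sub_left, real_inner_smul_left, real_inner_smul_left]
    have hzero : Real.exp (σ p) * ⟪g, u⟫ * ⟪u, X p⟫
        + Real.exp (σ p) * (⟪u, fderiv ℝ X p u⟫ + ⟪deriv (deriv γ) t, X p⟫) = 0 := by
      rw [hkill, hXacc]; ring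
    exact hprod.congr_deriv hzero
  intro s t
  exact is_const_of_deriv_eq_zero (fun x => (key x).differentiableAt)
    (fun x => (key x).deriv) s t
end

section
/- Let p : ℝ² → ℝ be a smooth function and define the vector field V(x,y) = (∂p/∂y (x,y), −∂p/∂x (x,y)) on ℝ². Let γ(t) = (x(t), y(t)) be a twice differentiable curve satisfying the geodesic equations ẍ − g(x,y) ẋ ẏ + f(x,y) ẏ² = 0 and ÿ − f(x,y) ẋ ẏ + g(x,y) ẋ² = 0, where f = ∂p/∂y and g = −∂p/∂x. Identifying ℝ² with ℂ via z = x + iy, the function t ↦ ż(t) · e^{−i p(γ(t))} is constant; equivalently ż(t) = ż(0) e^{i(p(γ(t)) − p(γ(0)))} for all t. -/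
open Complex

/-- For a flat metric connection with vectorial torsion in the plane, defined by the vector
field `V = (∂p/∂y, −∂p/∂x)`, the quantity `ż e^{−ip(γ)}` is a constant of motion along
geodesics `γ = (x, y)`, `z = x + iy`; equivalently `ż(t) = ż(0) e^{i(p(γ(t))−p(γ(0)))}`. -/
theorem flat_plane_geodesic_invariant
    (p : ℝ × ℝ → ℝ) (hp : ContDiff ℝ (⊤ : ℕ∞) p)
    (f g : ℝ × ℝ → ℝ)
    (hf : ∀ q : ℝ × ℝ, f q = fderiv ℝ p q (0, 1))
    (hg : ∀ q : ℝ × ℝ, g q = -fderiv ℝ p q (1, 0))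
    (x y : ℝ → ℝ)
    (hx : Differentiable ℝ x) (hx' : Differentiable ℝ (deriv x))
    (hy : Differentiable ℝ y) (hy' : Differentiable ℝ (deriv y))
    (heq1 : ∀ t : ℝ, deriv (deriv x) t
        - g (x t, y t) * deriv x t * deriv y t + f (x t, y t) * (deriv y t) ^ 2 = 0)
    (heq2 : ∀ t : ℝ, deriv (deriv y) t
        - f (x t, y t) * deriv x t * deriv y t + g (x t, y t) * (deriv x t) ^ 2 = 0)
    (z : ℝ → ℂ) (hz : ∀ t : ℝ, z t = (x t : ℂ) + (y t : ℂ) * Complex.I) :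
    (∀ s t : ℝ, deriv z s * Complex.exp (-Complex.I * (p (x s, y s) : ℂ))
        = deriv z t * Complex.exp (-Complex.I * (p (x t, y t) : ℂ)))
      ∧ (∀ t : ℝ, deriv z t
          = deriv z 0 * Complex.exp (Complex.I * ((p (x t, y t) : ℂ) - (p (x 0, y 0) : ℂ)))) := by
  have hzfun : z = fun t => (x t : ℂ) + (y t : ℂ) * Complex.I := funext hz
  have hdz : ∀ t, HasDerivAt z ((↑(deriv x t) : ℂ) + (↑(deriv y t) : ℂ) * Complex.I) t := by
    intro t
    rw [hzfun]
    exact ((hx t).hasDerivAt.ofReal_comp).add (((hy t).hasDerivAt.ofReal_comp).mul_const _)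
  have hdz' : ∀ t, deriv z t = (↑(deriv x t) : ℂ) + (↑(deriv y t) : ℂ) * Complex.I :=
    fun t => (hdz t).deriv
  set q : ℝ → ℝ := fun t => p (x t, y t) with hqdef
  have hdq : ∀ t, HasDerivAt q (-g (x t, y t) * deriv x t + f (x t, y t) * deriv y t) t := by
    intro t
    have hγ : HasDerivAt (fun t => (x t, y t)) (deriv x t, deriv y t) t :=
      HasDerivAt.prodMk ((hx t).hasDerivAt) ((hy t).hasDerivAt)
    have hP := ((hp.differentiable (by simp)) (x t, y t)).hasFDerivAt
    have hcomp := hP.comp_hasDerivAt t hγ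
    have hlin : fderiv ℝ p (x t, y t) (deriv x t, deriv y t)
        = -g (x t, y t) * deriv x t + f (x t, y t) * deriv y t := by
      have hv : (deriv x t, deriv y t)
          = deriv x t • ((1:ℝ), (0:ℝ)) + deriv y t • ((0:ℝ), (1:ℝ)) := by
        simp [Prod.ext_iff]
      rw [hv, map_add, (fderiv ℝ p (x t, y t)).map_smul, (fderiv ℝ p (x t, y t)).map_smul]
      have h1 : fderiv ℝ p (x t, y t) (1, 0) = -g (x t, y t) := by
        have := hg (x t, y t); linarith
      have h2 : fderiv ℝ p (x t, y t) (0, 1) = f (x t, y t) := (hf (x t, y t)).symm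
      rw [h1, h2]; simp [smul_eq_mul]; ring
    rw [hlin] at hcomp; exact hcomp
  -- the conserved quantity
  set F : ℝ → ℂ := fun t => deriv z t * Complex.exp (-Complex.I * (q t : ℂ)) with hFdef
  have hdF : ∀ t, HasDerivAt F 0 t := by
    intro t
    have hw : HasDerivAt (deriv z)
        ((↑(deriv (deriv x) t) : ℂ) + (↑(deriv (deriv y) t) : ℂ) * Complex.I) t := by
      have : deriv z = fun t => (↑(deriv x t) : ℂ) + (↑(deriv y t) : ℂ) * Complex.I := funext hdz'
      rw [this]
      exact ((hx' t).hasDerivAt.ofReal_comp).add (((hy' t).hasDerivAt.ofReal_comp).mul_const _)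
    have hqc : HasDerivAt (fun t => -Complex.I * (q t : ℂ))
        (-Complex.I * ((-g (x t, y t) * deriv x t + f (x t, y t) * deriv y t : ℝ) : ℂ)) t :=
      ((hdq t).ofReal_comp).const_mul _
    have he := hqc.cexp
    have hmul := hw.mul he
    have hD : ((↑(deriv (deriv x) t) : ℂ) + (↑(deriv (deriv y) t) : ℂ) * Complex.I)
          * Complex.exp (-Complex.I * (q t : ℂ))
        + deriv z t * (Complex.exp (-Complex.I * (q t : ℂ))
          * (-Complex.I * ((-g (x t, y t) * deriv x t + f (x t, y t) * deriv y t : ℝ) : ℂ)))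
        = 0 := by
      rw [hdz' t]
      have h1 : ((↑(deriv (deriv x) t) : ℂ))
          = (g (x t, y t) : ℂ) * (↑(deriv x t) : ℂ) * (↑(deriv y t) : ℂ)
            - (f (x t, y t) : ℂ) * (↑(deriv y t) : ℂ) ^ 2 := by
        have := heq1 t; push_cast [show deriv (deriv x) t
          = g (x t, y t) * deriv x t * deriv y t - f (x t, y t) * (deriv y t) ^ 2 by linarith]
        ring
      have h2 : ((↑(deriv (deriv y) t) : ℂ))
          = (f (x t, y t) : ℂ) * (↑(deriv x t) : ℂ) * (↑(deriv y t) : ℂ)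
            - (g (x t, y t) : ℂ) * (↑(deriv x t) : ℂ) ^ 2 := by
        have := heq2 t; push_cast [show deriv (deriv y) t
          = f (x t, y t) * deriv x t * deriv y t - g (x t, y t) * (deriv x t) ^ 2 by linarith]
        ring
      rw [h1, h2]
      push_cast
      linear_combination (Complex.exp (-Complex.I * (q t : ℂ))
        * ((g (x t, y t) : ℂ) * (↑(deriv x t) : ℂ) * (↑(deriv y t) : ℂ)
          - (f (x t, y t) : ℂ) * (↑(deriv y t) : ℂ) ^ 2)) * Complex.I_sq
    show HasDerivAt (fun t => deriv z t * Complex.exp (-Complex.I * (q t : ℂ))) 0 t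
    exact hD ▸ hmul
  have hFdiff : Differentiable ℝ F := fun t => (hdF t).differentiableAt
  have hFconst : ∀ s t : ℝ, F s = F t :=
    is_const_of_deriv_eq_zero hFdiff (fun t => (hdF t).deriv)
  constructor
  · intro s t; exact hFconst s t
  · intro t
    have h := hFconst t 0
    simp only [hFdef] at h
    have hne : Complex.exp (-Complex.I * (q t : ℂ)) ≠ 0 := Complex.exp_ne_zero _
    calc deriv z t
        = deriv z t * Complex.exp (-Complex.I * (q t : ℂ))
            * Complex.exp (Complex.I * (q t : ℂ)) := by
          rw [mul_assoc, ← Complex.exp_add]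
          simp
      _ = deriv z 0 * Complex.exp (-Complex.I * (q 0 : ℂ))
            * Complex.exp (Complex.I * (q t : ℂ)) := by rw [h]
      _ = deriv z 0 * Complex.exp (Complex.I * ((q t : ℂ) - (q 0 : ℂ))) := by
          rw [mul_assoc, ← Complex.exp_add]
          ring_nf
end

section
/- Let y : ℝ → ℝ be a twice differentiable function satisfying the ordinary differential equation ÿ(t) = y(t) ẏ(t) √(1 − ẏ(t)²) with |ẏ(t)| < 1 for all t. Then the function t ↦ y(t)²/2 − arcsin(ẏ(t)) is constant. -/
open Real

theorem HasDerivAt.arcsin {f : ℝ → ℝ} {f' x : ℝ} (hf : HasDerivAt f f' x) (h : |f x| < 1) :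
    HasDerivAt (fun t => arcsin (f t)) (f' / √(1 - f x ^ 2)) x := by
  obtain ⟨h₁, h₂⟩ := abs_lt.1 h
  exact ((hasDerivAt_arcsin h₁.ne' h₂.ne).comp x hf).congr_deriv (one_div_mul_eq_div _ _)

/-- The ODE `ÿ = y ẏ √(1 − ẏ²)` (describing the `y`-coordinate of a unit-speed geodesic of
the vectorial torsion connection of `V = y ∂_x` in the plane) has the invariant of motion
`y²/2 − arcsin ẏ`. -/
theorem invariant_of_motion_y_ODE
    (y : ℝ → ℝ)
    (hy : Differentiable ℝ y) (hy' : Differentiable ℝ (deriv y))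
    (hbound : ∀ t : ℝ, |deriv y t| < 1)
    (hODE : ∀ t : ℝ, deriv (deriv y) t
        = y t * deriv y t * Real.sqrt (1 - (deriv y t) ^ 2)) :
    ∀ s t : ℝ, (y s) ^ 2 / 2 - Real.arcsin (deriv y s)
      = (y t) ^ 2 / 2 - Real.arcsin (deriv y t) := by
  have hF : ∀ t, HasDerivAt (fun t => y t ^ 2 / 2 - arcsin (deriv y t)) 0 t := by
    intro t
    have hsqrt : 0 < √(1 - deriv y t ^ 2) :=
      sqrt_pos.2 (sub_pos.2 ((sq_lt_one_iff_abs_lt_one _).2 (hbound t)))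
    have hsq : HasDerivAt (fun t => y t ^ 2 / 2) (y t * deriv y t) t :=
      (((hy t).hasDerivAt.pow 2).div_const 2).congr_deriv (by ring)
    have harcsin := (hy' t).hasDerivAt.arcsin (hbound t)
    rw [hODE t, mul_div_assoc, div_self hsqrt.ne', mul_one] at harcsin
    exact (hsq.sub harcsin).congr_deriv (sub_self _)
  exact is_const_of_deriv_eq_zero (fun t => (hF t).differentiableAt) (fun t => (hF t).deriv)
end

section
/- Let s, φ : ℝ → ℝ be twice differentiable with s(t) ∈ (0, π) for all t, satisfying the geodesic equations of the flat metric connection with vectorial torsion V = cot(s) ∂_s on the round sphere (metric ds² + sin²(s) dφ²): s̈ − sin(s)cos(s) φ̇² + (ṡ² + sin²(s) φ̇²) cot(s) − cot(s) ṡ² = 0 and φ̈ + cot(s) ṡ φ̇ = 0. Then both ṡ(t) and sin(s(t)) φ̇(t) are constant in t. Consequently, for a unit-speed solution the cosine of the angle between the curve and the parallel circles, namely sin(s)φ̇, is constant, i.e. the curve is a loxodrome. -/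
/-- For the flat metric connection with vectorial torsion `V = cot(s) ∂_s` on the round
sphere (metric `ds² + sin²(s) dφ²`), the quantities `ṡ` and `sin(s) φ̇` are constant along
geodesics: for a unit-speed solution the cosine of the angle with the parallel circles,
`sin(s) φ̇`, is constant, so the curve is a loxodrome (Cartan's observation). -/
theorem sphere_flat_connection_loxodromes
    (s φ : ℝ → ℝ)
    (hs : Differentiable ℝ s) (hs' : Differentiable ℝ (deriv s))
    (hφ : Differentiable ℝ φ) (hφ' : Differentiable ℝ (deriv φ))
    (hrange : ∀ t : ℝ, s t ∈ Set.Ioo 0 Real.pi)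
    (heq1 : ∀ t : ℝ, deriv (deriv s) t
        - Real.sin (s t) * Real.cos (s t) * (deriv φ t) ^ 2
        + ((deriv s t) ^ 2 + Real.sin (s t) ^ 2 * (deriv φ t) ^ 2)
            * (Real.cos (s t) / Real.sin (s t))
        - (Real.cos (s t) / Real.sin (s t)) * (deriv s t) ^ 2 = 0)
    (heq2 : ∀ t : ℝ, deriv (deriv φ) t
        + (Real.cos (s t) / Real.sin (s t)) * deriv s t * deriv φ t = 0) :
    ∀ t₁ t₂ : ℝ, deriv s t₁ = deriv s t₂
      ∧ Real.sin (s t₁) * deriv φ t₁ = Real.sin (s t₂) * deriv φ t₂ := by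
  have hsin : ∀ t, Real.sin (s t) ≠ 0 := fun t =>
    ne_of_gt (Real.sin_pos_of_pos_of_lt_pi (hrange t).1 (hrange t).2)
  -- First part: s̈ = 0, so ṡ is constant.
  have hs2 : ∀ t, deriv (deriv s) t = 0 := by
    intro t
    have h := heq1 t
    have hst := hsin t
    field_simp at h
    have h0 : deriv (deriv s) t * Real.sin (s t) = 0 := by linear_combination h
    rcases mul_eq_zero.mp h0 with h' | h'
    · exact h'
    · exact absurd h' hst
  have hconst1 : ∀ t₁ t₂ : ℝ, deriv s t₁ = deriv s t₂ := by
    intro t₁ t₂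
    exact is_const_of_deriv_eq_zero hs' hs2 t₁ t₂
  -- Second part: d/dt (sin(s) φ̇) = 0.
  have hg : ∀ t, HasDerivAt (fun t => Real.sin (s t) * deriv φ t)
      (Real.cos (s t) * deriv s t * deriv φ t + Real.sin (s t) * deriv (deriv φ) t) t := by
    intro t
    have h1 : HasDerivAt (fun t => Real.sin (s t)) (Real.cos (s t) * deriv s t) t :=
      (Real.hasDerivAt_sin (s t)).comp t (hs t).hasDerivAt
    exact h1.mul (hφ' t).hasDerivAt
  have hgdiff : Differentiable ℝ (fun t => Real.sin (s t) * deriv φ t) :=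
    fun t => (hg t).differentiableAt
  have hgz : ∀ t, deriv (fun t => Real.sin (s t) * deriv φ t) t = 0 := by
    intro t
    rw [(hg t).deriv]
    have h := heq2 t
    have hst := hsin t
    field_simp at h
    nlinarith [h]
  intro t₁ t₂
  exact ⟨hconst1 t₁ t₂, is_const_of_deriv_eq_zero hgdiff hgz t₁ t₂⟩
end
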